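/- arXiv:0811.1612 — 2 statements merged into one kernel-verified Lean document; each statement's English description precedes it below -/
import Mathlib

section
/- Let 1 ≤ p, q ≤ ∞, N ≥ 1 an integer, Λ and Λ' relatively-separated subsets of ℝ^d, and A = (a(λ,λ'))_{λ∈Λ,λ'∈Λ'} a matrix in the Sjöstrand class C(Λ,Λ'). Then there exists a constant C depending only on d, p, q such that for all c ∈ ℓ^q(Λ'): ‖( ‖(A_N Ψ_n^N − Ψ_n^N A_N)c‖_{ℓ^p(Λ)} )_{n∈Nℤ^d}‖_{ℓ^q(Nℤ^d)} ≤ C R(Λ)^{1/p} R(Λ')^{1−1/p} · min_{0≤s≤N}( ‖A − A_s‖_C + (s/N)‖A‖_C ) · ‖( ‖Ψ_n^N c‖_{ℓ^p(Λ')} )_{n∈Nℤ^d}‖_{ℓ^q(Nℤ^d)}. -/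
/-!
Write `φ_k(x) = ψ((x - Nk)/N)`, so that the commutator `A_N Ψ_{Nk}^N - Ψ_{Nk}^N A_N` has the
entries `a_N(λ,λ') (φ_k(λ') - φ_k(λ))`. Since `ψ` is `1`-Lipschitz for the sup-norm, such an
entry is at most `(s/N) |a(λ,λ')|` when `‖λ - λ'‖_∞ < s`, and at most `|(A - A_s)(λ,λ')|`
otherwise. It vanishes unless `λ'` lies within `3N` of `Nk`, and there
`c(λ') = (Ψ_{N(k+m)}^N c)(λ')` for one of `6^d` shifts `m`. Schur's test applies to the
majorant `|A - A_s| + (s/N)|A|`, whose row and column sums are bounded by `R(Λ')` and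
`2^d R(Λ)` times `‖A - A_s‖_C + (s/N)‖A‖_C`; the `ℓ^q` norm over `k` then absorbs the shifts.
Passing to the infimum over `s` only needs care when the infimum vanishes, but then `A` is
diagonal and commutes with every `Ψ_{Nk}^N`.
-/

open scoped ENNReal NNReal

/-- The cube `k + [0,1)^d` in `ℝ^d`. -/
def unitCube {d : ℕ} (k : Fin d → ℤ) : Set (Fin d → ℝ) :=
  {x | ∀ i, (k i : ℝ) ≤ x i ∧ x i < k i + 1}

/-- The relative-separation constant `R(Λ) = sup_x ∑_{λ ∈ Λ} χ_{λ+[0,1)^d}(x)` of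
a subset `Λ` of `ℝ^d`; `Λ` is relatively separated when `relSep Λ < ∞`. -/
noncomputable def relSep {d : ℕ} (Λ : Set (Fin d → ℝ)) : ℝ≥0∞ :=
  ⨆ x : Fin d → ℝ, ∑' l : Λ,
    (unitCube (0 : Fin d → ℤ)).indicator (fun _ => (1 : ℝ≥0∞)) (x - (l : Fin d → ℝ))

/-- The Sjöstrand class norm
`‖A‖_C = ∑_{k ∈ ℤ^d} sup { |a(λ,λ')| : λ - λ' ∈ k + [0,1)^d }` of a matrix indexed by
`Λ × Λ'`; the matrix belongs to the Sjöstrand class `C(Λ,Λ')` when `sjNorm a < ∞`. -/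
noncomputable def sjNorm {d : ℕ} {Λ Λ' : Set (Fin d → ℝ)} (a : Λ → Λ' → ℂ) : ℝ≥0∞ :=
  ∑' k : Fin d → ℤ, ⨆ (l : Λ) (l' : Λ')
    (_ : (l : Fin d → ℝ) - (l' : Fin d → ℝ) ∈ unitCube k), (‖a l l'‖₊ : ℝ≥0∞)

/-- The action `(Ac)(λ) = ∑_{λ'} a(λ,λ') c(λ')` of a matrix on sequences. -/
noncomputable def matApply {d : ℕ} {Λ Λ' : Set (Fin d → ℝ)}
    (a : Λ → Λ' → ℂ) (c : Λ' → ℂ) : Λ → ℂ :=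
  fun l => ∑' l' : Λ', a l l' * c l'

/-- The `ℓ^p` norm (valued in `ℝ≥0∞`) of an `ℝ≥0∞`-valued family:
for `p = ∞` it is the supremum, otherwise `(∑ f i ^ p)^(1/p)`. -/
noncomputable def seqNormE {ι : Type*} (p : ℝ≥0∞) (f : ι → ℝ≥0∞) : ℝ≥0∞ :=
  if p = ∞ then ⨆ i, f i else (∑' i, f i ^ p.toReal) ^ (1 / p.toReal)

/-- The `ℓ^p` norm (valued in `ℝ≥0∞`) of a complex-valued family. -/
noncomputable def seqNorm {ι : Type*} (p : ℝ≥0∞) (f : ι → ℂ) : ℝ≥0∞ :=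
  seqNormE p fun i => (‖f i‖₊ : ℝ≥0∞)

/-- An operator `A` between sequence spaces has `ℓ^p`-stability if there is a
positive finite constant `C` with `C⁻¹ ‖c‖_p ≤ ‖A c‖_p ≤ C ‖c‖_p` for every `c ∈ ℓ^p`. -/
def HasStability {ι κ : Type*} (p : ℝ≥0∞) (A : (ι → ℂ) → κ → ℂ) : Prop :=
  ∃ C : ℝ≥0∞, 0 < C ∧ C < ∞ ∧
    ∀ c : ι → ℂ, seqNorm p c < ∞ →
      C⁻¹ * seqNorm p c ≤ seqNorm p (A c) ∧ seqNorm p (A c) ≤ C * seqNorm p c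

/-- The truncation `A_s` of a matrix: entries with `‖λ - λ'‖_∞ ≥ s` are set to zero. -/
noncomputable def truncMat {d : ℕ} {Λ Λ' : Set (Fin d → ℝ)} (s : ℝ)
    (a : Λ → Λ' → ℂ) : Λ → Λ' → ℂ :=
  fun l l' => if ‖(l : Fin d → ℝ) - (l' : Fin d → ℝ)‖ < s then a l l' else 0

/-- The cut-off function `ψ(x) = min(max(2 - ‖x‖_∞, 0), 1)` on `ℝ^d`
(the norm on `Fin d → ℝ` is the sup-norm `‖·‖_∞`). -/
noncomputable def psiCut {d : ℕ} (x : Fin d → ℝ) : ℝ :=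
  min (max (2 - ‖x‖) 0) 1

/-- The multiplication operator `Ψ_n^N` with `n = N k ∈ N ℤ^d`:
`(Ψ_n^N c)(λ) = ψ((λ - n)/N) c(λ)`. -/
noncomputable def psiOp {d : ℕ} {Λ : Set (Fin d → ℝ)} (N : ℕ) (k : Fin d → ℤ)
    (c : Λ → ℂ) : Λ → ℂ :=
  fun l => (psiCut (fun i => ((l : Fin d → ℝ) i - (N : ℝ) * (k i : ℝ)) / (N : ℝ)) : ℂ) * c l

namespace ENNReal

variable {ι : Type*}

lemma tsum_Lp_add_le (f g : ι → ℝ≥0∞) {r : ℝ} (hr : 1 ≤ r) :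
    (∑' i, (f i + g i) ^ r) ^ (1 / r) ≤ (∑' i, f i ^ r) ^ (1 / r) + (∑' i, g i ^ r) ^ (1 / r) := by
  let : MeasurableSpace ι := ⊤
  have : MeasurableSingletonClass ι := ⟨fun _ => trivial⟩
  simpa [MeasureTheory.lintegral_count] using
    lintegral_Lp_add_le (μ := MeasureTheory.Measure.count)
    (measurable_from_top (f := f)).aemeasurable (measurable_from_top (f := g)).aemeasurable hr

lemma tsum_inner_le_weight_mul_Lp {r : ℝ} (hr : 1 ≤ r) (w f : ι → ℝ≥0∞) :
    ∑' i, w i * f i ≤ (∑' i, w i) ^ (1 - r⁻¹) * (∑' i, w i * f i ^ r) ^ r⁻¹ := by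
  have h₀ : 0 ≤ r⁻¹ := inv_nonneg.2 (zero_le_one.trans hr)
  have h₁ : 0 ≤ 1 - r⁻¹ := sub_nonneg.2 (inv_le_one_of_one_le₀ hr)
  rw [ENNReal.tsum_eq_iSup_sum]
  refine iSup_le fun s => (inner_le_weight_mul_Lp_of_nonneg s hr w f).trans ?_
  gcongr <;> exact ENNReal.sum_le_tsum s

lemma le_mul_biInf_mul {S : Set ι} (hS : S.Nonempty) {X K Z : ℝ≥0∞}
    {f : ι → ℝ≥0∞} (h : ∀ s ∈ S, X ≤ K * f s * Z) (h₀ : ⨅ s ∈ S, f s = 0 → X = 0) :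
    X ≤ K * (⨅ s ∈ S, f s) * Z := by
  rcases eq_or_ne (⨅ s ∈ S, f s) 0 with hf | hf
  · simp [h₀ hf]
  simp_rw [mul_right_comm K] at h ⊢
  rcases eq_or_ne (K * Z) ∞ with hKZ | hKZ
  · simp [hKZ, top_mul hf]
  rcases eq_or_ne (K * Z) 0 with hKZ₀ | hKZ₀
  · obtain ⟨s, hs⟩ := hS
    simpa [hKZ₀] using h s hs
  simp_rw [mul_iInf_of_ne hKZ₀ hKZ]
  exact le_iInf₂ h

end ENNReal

section SeqNorm

variable {ι κ : Type*} {p : ℝ≥0∞}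

lemma seqNormE_mono {f g : ι → ℝ≥0∞} (h : ∀ i, f i ≤ g i) : seqNormE p f ≤ seqNormE p g := by
  unfold seqNormE
  split
  · exact iSup_mono h
  · gcongr with i
    exact h i

lemma seqNormE_comp_equiv (e : ι ≃ κ) (f : κ → ℝ≥0∞) :
    seqNormE p (fun i => f (e i)) = seqNormE p f := by
  unfold seqNormE
  split
  · exact e.iSup_comp (g := f)
  · rw [e.tsum_eq (fun k => f k ^ p.toReal)]

lemma seqNormE_comp_add_right {G : Type*} [AddGroup G] (g : G → ℝ≥0∞) (m : G) :
    seqNormE p (fun k => g (k + m)) = seqNormE p g :=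
  seqNormE_comp_equiv (Equiv.addRight m) g

lemma seqNormE_zero (hp : p ≠ 0) : seqNormE p (fun _ : ι => 0) = 0 := by
  unfold seqNormE
  split
  · simp
  · rename_i hp'
    simp [ENNReal.toReal_pos hp hp']

lemma le_seqNormE (hp : p ≠ 0) (f : ι → ℝ≥0∞) (i : ι) : f i ≤ seqNormE p f := by
  unfold seqNormE
  split
  · exact le_iSup f i
  · rename_i hp'
    calc f i = (f i ^ p.toReal) ^ (1 / p.toReal) := by
          rw [one_div, ENNReal.rpow_rpow_inv (ENNReal.toReal_pos hp hp').ne']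
      _ ≤ _ := by gcongr; exact ENNReal.le_tsum i

lemma seqNormE_const_mul (hp : p ≠ 0) (C : ℝ≥0∞) (f : ι → ℝ≥0∞) :
    seqNormE p (fun i => C * f i) = C * seqNormE p f := by
  unfold seqNormE
  split
  · exact (ENNReal.mul_iSup C f).symm
  · rename_i hp'
    have hr := ENNReal.toReal_pos hp hp'
    simp_rw [ENNReal.mul_rpow_of_nonneg _ _ hr.le, ENNReal.tsum_mul_left,
      ENNReal.mul_rpow_of_nonneg _ _ (one_div_nonneg.2 hr.le), one_div,
      ENNReal.rpow_rpow_inv hr.ne']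

lemma seqNormE_add_le (hp : 1 ≤ p) (f g : ι → ℝ≥0∞) :
    seqNormE p (fun i => f i + g i) ≤ seqNormE p f + seqNormE p g := by
  unfold seqNormE
  split
  · exact iSup_le fun i => add_le_add (le_iSup f i) (le_iSup g i)
  · rename_i hp'
    exact ENNReal.tsum_Lp_add_le f g (ENNReal.toReal_mono hp' hp)

lemma seqNormE_finset_sum_le (hp : 1 ≤ p) {β : Type*} (s : Finset β) (f : β → ι → ℝ≥0∞) :
    seqNormE p (fun i => ∑ m ∈ s, f m i) ≤ ∑ m ∈ s, seqNormE p (f m) := by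
  classical
  induction s using Finset.induction with
  | empty => simp [seqNormE_zero (zero_lt_one.trans_le hp).ne']
  | insert m s hm ih =>
    simp only [Finset.sum_insert hm]
    exact (seqNormE_add_le hp _ _).trans (add_le_add le_rfl ih)

/-- Schur's test. -/
lemma seqNormE_tsum_mul_le (hp : 1 ≤ p) (w : ι → κ → ℝ≥0∞) {Rr Rc : ℝ≥0∞}
    (hrow : ∀ i, ∑' j, w i j ≤ Rr) (hcol : ∀ j, ∑' i, w i j ≤ Rc) (v : κ → ℝ≥0∞) :
    seqNormE p (fun i => ∑' j, w i j * v j) ≤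
      Rc ^ (1 / p.toReal) * Rr ^ (1 - 1 / p.toReal) * seqNormE p v := by
  rcases eq_or_ne p ∞ with rfl | hp'
  · simp only [seqNormE, ENNReal.toReal_top, div_zero, ENNReal.rpow_zero, one_mul,
      sub_zero, ENNReal.rpow_one]
    refine iSup_le fun i => ?_
    calc ∑' j, w i j * v j ≤ ∑' j, w i j * ⨆ j, v j := by gcongr with j; exact le_iSup v j
      _ = (∑' j, w i j) * ⨆ j, v j := ENNReal.tsum_mul_right
      _ ≤ Rr * ⨆ j, v j := by gcongr; exact hrow i
  set r := p.toReal
  have hr : 1 ≤ r := ENNReal.toReal_mono hp' hp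
  have hr₀ : 0 < r := zero_lt_one.trans_le hr
  have hp₀ : p ≠ 0 := (zero_lt_one.trans_le hp).ne'
  set T : ι → ℝ≥0∞ := fun i => ∑' j, w i j * v j ^ r
  have hHolder : ∀ i, ∑' j, w i j * v j ≤ Rr ^ (1 - 1 / r) * T i ^ (1 / r) := fun i => by
    rw [one_div]
    refine (ENNReal.tsum_inner_le_weight_mul_Lp hr (w i) v).trans ?_
    gcongr
    · exact sub_nonneg.2 (inv_le_one_of_one_le₀ hr)
    · exact hrow i
  have hT : ∑' i, T i ≤ Rc * ∑' j, v j ^ r := by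
    calc ∑' i, T i = ∑' j, (∑' i, w i j) * v j ^ r := by
          simp_rw [T, ← ENNReal.tsum_mul_right]; exact ENNReal.tsum_comm
      _ ≤ ∑' j, Rc * v j ^ r := by gcongr with j; exact hcol j
      _ = Rc * ∑' j, v j ^ r := ENNReal.tsum_mul_left
  calc seqNormE p (fun i => ∑' j, w i j * v j)
      ≤ seqNormE p (fun i => Rr ^ (1 - 1 / r) * T i ^ (1 / r)) := seqNormE_mono hHolder
    _ = Rr ^ (1 - 1 / r) * (∑' i, T i) ^ (1 / r) := by
      rw [seqNormE_const_mul hp₀]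
      simp only [seqNormE, if_neg hp', one_div, ENNReal.rpow_inv_rpow hr₀.ne', r]
    _ ≤ Rr ^ (1 - 1 / r) * (Rc * ∑' j, v j ^ r) ^ (1 / r) := by gcongr
    _ = Rc ^ (1 / r) * Rr ^ (1 - 1 / r) * seqNormE p v := by
      rw [ENNReal.mul_rpow_of_nonneg _ _ (by positivity), seqNormE, if_neg hp']
      ring

end SeqNorm

section Counting

variable {d : ℕ}

lemma mem_unitCube_floor (x : Fin d → ℝ) : x ∈ unitCube (fun i => ⌊x i⌋) :=
  fun _ => ⟨Int.floor_le _, Int.lt_floor_add_one _⟩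

lemma mem_unitCube_iff_sub_mem (x : Fin d → ℝ) (k : Fin d → ℤ) :
    x ∈ unitCube k ↔ x - (fun i => (k i : ℝ)) ∈ unitCube 0 := by
  simp only [unitCube, Set.mem_ofPred_eq, Pi.sub_apply, Pi.zero_apply, Int.cast_zero]
  refine forall_congr' fun i => ?_
  constructor <;> rintro ⟨h₁, h₂⟩ <;> constructor <;> linarith

lemma indicator_unitCube_eq (x : Fin d → ℝ) (k : Fin d → ℤ) :
    (unitCube k).indicator (fun _ => (1 : ℝ≥0∞)) x =
      (unitCube 0).indicator (fun _ => 1) (x - fun i => (k i : ℝ)) := by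
  by_cases h : x ∈ unitCube k
  · rw [Set.indicator_of_mem h, Set.indicator_of_mem ((mem_unitCube_iff_sub_mem x k).1 h)]
  · rw [Set.indicator_of_notMem h, Set.indicator_of_notMem (mt (mem_unitCube_iff_sub_mem x k).2 h)]

lemma tsum_le_mul_tsum_of_mem_unitCube {α : Type*} (v : α → Fin d → ℝ) (b : α → ℝ≥0∞)
    (W : (Fin d → ℤ) → ℝ≥0∞) (hb : ∀ j k, v j ∈ unitCube k → b j ≤ W k) {M : ℝ≥0∞}
    (hM : ∀ k, ∑' j, (unitCube k).indicator (fun _ => (1 : ℝ≥0∞)) (v j) ≤ M) :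
    ∑' j, b j ≤ M * ∑' k, W k := by
  calc ∑' j, b j ≤ ∑' j, ∑' k, (unitCube k).indicator (fun _ => W k) (v j) := by
        gcongr with j
        refine (hb j _ (mem_unitCube_floor (v j))).trans ?_
        rw [← Set.indicator_of_mem (mem_unitCube_floor (v j)) (fun _ => W _)]
        exact ENNReal.le_tsum (f := fun k => (unitCube k).indicator (fun _ => W k) (v j)) _
    _ = ∑' k, W k * ∑' j, (unitCube k).indicator (fun _ => (1 : ℝ≥0∞)) (v j) := by
        rw [ENNReal.tsum_comm]
        refine tsum_congr fun k => ?_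
        rw [← ENNReal.tsum_mul_left]
        refine tsum_congr fun j => ?_
        by_cases h : v j ∈ unitCube k <;> simp [h]
    _ ≤ ∑' k, W k * M := by gcongr with k; exact hM k
    _ = M * ∑' k, W k := by rw [ENNReal.tsum_mul_right, mul_comm]

lemma tsum_indicator_unitCube_sub_le (Λ : Set (Fin d → ℝ)) (x : Fin d → ℝ) :
    ∑' l : Λ, (unitCube 0).indicator (fun _ => (1 : ℝ≥0∞)) (x - (l : Fin d → ℝ)) ≤ relSep Λ :=
  le_iSup (fun x => ∑' l : Λ, (unitCube 0).indicator (fun _ => (1 : ℝ≥0∞)) (x - (l : Fin d → ℝ))) x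

/-- The cube `y + [0,1)^d` is covered by the `2^d` cubes `(y + ε) - [0,1)^d`, `ε ∈ {0,1}^d`,
which are of the kind counted by `relSep`. -/
lemma tsum_indicator_unitCube_sub_le_two_pow (Λ : Set (Fin d → ℝ)) (y : Fin d → ℝ) :
    ∑' l : Λ, (unitCube 0).indicator (fun _ => (1 : ℝ≥0∞)) ((l : Fin d → ℝ) - y) ≤
      2 ^ d * relSep Λ := by
  set corner : (Fin d → Bool) → Fin d → ℝ := fun ε i => y i + if ε i then 1 else 0
  have hcover : ∀ l : Λ, (unitCube 0).indicator (fun _ => (1 : ℝ≥0∞)) ((l : Fin d → ℝ) - y) ≤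
      ∑' ε, (unitCube 0).indicator (fun _ => (1 : ℝ≥0∞)) (corner ε - (l : Fin d → ℝ)) := by
    intro l
    by_cases hl : (l : Fin d → ℝ) - y ∈ unitCube 0
    · have hε : corner (fun i => decide (y i < (l : Fin d → ℝ) i)) - (l : Fin d → ℝ) ∈
          unitCube 0 := by
        intro i
        have := hl i
        simp only [Pi.sub_apply, Pi.zero_apply, Int.cast_zero, zero_add] at this ⊢
        by_cases h : y i < (l : Fin d → ℝ) i <;>
          simp only [corner, h, decide_true, decide_false, Bool.false_eq_true, if_true, if_false,
            add_zero] <;> constructor <;> linarith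
      rw [Set.indicator_of_mem hl]
      refine le_trans ?_ (ENNReal.le_tsum (fun i => decide (y i < (l : Fin d → ℝ) i)))
      rw [Set.indicator_of_mem hε]
    · simp [hl]
  calc _ ≤ ∑' l : Λ, ∑' ε, (unitCube 0).indicator (fun _ => (1 : ℝ≥0∞))
        (corner ε - (l : Fin d → ℝ)) := ENNReal.tsum_le_tsum hcover
    _ = ∑' ε, ∑' l : Λ, (unitCube 0).indicator (fun _ => (1 : ℝ≥0∞))
        (corner ε - (l : Fin d → ℝ)) := ENNReal.tsum_comm
    _ ≤ ∑' _ε : Fin d → Bool, relSep Λ := by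
        gcongr with ε; exact tsum_indicator_unitCube_sub_le Λ (corner ε)
    _ = 2 ^ d * relSep Λ := by simp [tsum_fintype]

variable {Λ Λ' : Set (Fin d → ℝ)}

noncomputable def sjEnvelope (a : Λ → Λ' → ℂ) (k : Fin d → ℤ) : ℝ≥0∞ :=
  ⨆ (l : Λ) (l' : Λ') (_ : (l : Fin d → ℝ) - (l' : Fin d → ℝ) ∈ unitCube k), ‖a l l'‖ₑ

lemma enorm_le_sjEnvelope (a : Λ → Λ' → ℂ) {l : Λ} {l' : Λ'} {k : Fin d → ℤ}
    (h : (l : Fin d → ℝ) - (l' : Fin d → ℝ) ∈ unitCube k) : ‖a l l'‖ₑ ≤ sjEnvelope a k :=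
  le_iSup₂_of_le l l' (le_iSup (fun _ : _ ∈ unitCube k => ‖a l l'‖ₑ) h)

lemma enorm_le_sjNorm (a : Λ → Λ' → ℂ) (l : Λ) (l' : Λ') : ‖a l l'‖ₑ ≤ sjNorm a :=
  (enorm_le_sjEnvelope a (mem_unitCube_floor _)).trans (ENNReal.le_tsum _)

lemma tsum_enorm_row_le (a : Λ → Λ' → ℂ) (l : Λ) :
    ∑' l', ‖a l l'‖ₑ ≤ relSep Λ' * sjNorm a := by
  refine tsum_le_mul_tsum_of_mem_unitCube (fun l' : Λ' => (l : Fin d → ℝ) - (l' : Fin d → ℝ)) _ _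
    (fun _ _ => enorm_le_sjEnvelope a) fun k => ?_
  refine (tsum_congr fun l' => ?_).trans_le
    (tsum_indicator_unitCube_sub_le Λ' ((l : Fin d → ℝ) - fun i => (k i : ℝ)))
  rw [indicator_unitCube_eq, sub_right_comm]

lemma tsum_enorm_col_le (a : Λ → Λ' → ℂ) (l' : Λ') :
    ∑' l, ‖a l l'‖ₑ ≤ 2 ^ d * relSep Λ * sjNorm a := by
  refine tsum_le_mul_tsum_of_mem_unitCube (fun l : Λ => (l : Fin d → ℝ) - (l' : Fin d → ℝ)) _ _
    (fun _ _ => enorm_le_sjEnvelope a) fun k => ?_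
  refine (tsum_congr fun l => ?_).trans_le
    (tsum_indicator_unitCube_sub_le_two_pow Λ ((l' : Fin d → ℝ) + fun i => (k i : ℝ)))
  rw [indicator_unitCube_eq, sub_sub]

end Counting

section Cutoff

variable {d : ℕ}

lemma psiCut_nonneg (x : Fin d → ℝ) : 0 ≤ psiCut x := le_min (le_max_right _ _) zero_le_one

lemma psiCut_le_one (x : Fin d → ℝ) : psiCut x ≤ 1 := min_le_right _ _

lemma psiCut_eq_one {x : Fin d → ℝ} (h : ‖x‖ ≤ 1) : psiCut x = 1 := by
  rw [psiCut, max_eq_left (by linarith), min_eq_right (by linarith)]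

lemma norm_lt_two_of_psiCut_ne_zero {x : Fin d → ℝ} (h : psiCut x ≠ 0) : ‖x‖ < 2 := by
  by_contra! hx
  exact h (by rw [psiCut, max_eq_right (by linarith), min_eq_left zero_le_one])

lemma abs_psiCut_sub_le (x y : Fin d → ℝ) : |psiCut x - psiCut y| ≤ ‖x - y‖ := by
  calc |psiCut x - psiCut y| ≤ |max (2 - ‖x‖) 0 - max (2 - ‖y‖) 0| := by
        simpa [psiCut] using abs_min_sub_min_le_max (max (2 - ‖x‖) 0) 1 (max (2 - ‖y‖) 0) 1
    _ ≤ |(2 - ‖x‖) - (2 - ‖y‖)| := abs_max_sub_max_le_abs _ _ _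
    _ = |‖y‖ - ‖x‖| := by ring_nf
    _ ≤ ‖x - y‖ := by rw [norm_sub_rev]; exact abs_norm_sub_norm_le y x

noncomputable def cutoffAt (N : ℕ) (k : Fin d → ℤ) (x : Fin d → ℝ) : ℝ :=
  psiCut (fun i => (x i - (N : ℝ) * (k i : ℝ)) / (N : ℝ))

lemma psiOp_apply {Λ : Set (Fin d → ℝ)} (N : ℕ) (k : Fin d → ℤ) (c : Λ → ℂ) (l : Λ) :
    psiOp N k c l = (cutoffAt N k l : ℂ) * c l := rfl

lemma cutoffAt_nonneg (N : ℕ) (k : Fin d → ℤ) (x : Fin d → ℝ) : 0 ≤ cutoffAt N k x :=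
  psiCut_nonneg _

lemma abs_cutoffAt_sub_le_one (N : ℕ) (k : Fin d → ℤ) (x y : Fin d → ℝ) :
    |cutoffAt N k x - cutoffAt N k y| ≤ 1 :=
  abs_sub_le_of_nonneg_of_le (psiCut_nonneg _) (psiCut_le_one _) (psiCut_nonneg _)
    (psiCut_le_one _)

lemma norm_sub_scaled (N : ℕ) (k : Fin d → ℤ) (x y : Fin d → ℝ) :
    ‖(fun i => (x i - (N : ℝ) * (k i : ℝ)) / (N : ℝ)) -
      (fun i => (y i - (N : ℝ) * (k i : ℝ)) / (N : ℝ))‖ = ‖x - y‖ / N := by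
  have : (fun i => (x i - (N : ℝ) * (k i : ℝ)) / (N : ℝ)) -
      (fun i => (y i - (N : ℝ) * (k i : ℝ)) / (N : ℝ)) = (N : ℝ)⁻¹ • (x - y) := by
    ext i; simp only [Pi.sub_apply, Pi.smul_apply, smul_eq_mul]; ring
  rw [this, norm_smul, norm_inv, RCLike.norm_natCast, inv_mul_eq_div]

lemma abs_cutoffAt_sub_le (N : ℕ) (k : Fin d → ℤ) (x y : Fin d → ℝ) :
    |cutoffAt N k x - cutoffAt N k y| ≤ ‖x - y‖ / N :=
  (abs_psiCut_sub_le _ _).trans_eq (norm_sub_scaled N k x y)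

noncomputable def shifts (d : ℕ) : Finset (Fin d → ℤ) :=
  Fintype.piFinset fun _ => Finset.Icc (-3) 2

lemma card_shifts (d : ℕ) : (shifts d).card = 6 ^ d := by
  simp [shifts, Fintype.card_piFinset]

lemma exists_mem_shifts_cutoffAt_eq_one {N : ℕ} (hN : 0 < N) {k : Fin d → ℤ} {x y : Fin d → ℝ}
    (hx : cutoffAt N k x ≠ 0) (hxy : ‖x - y‖ < N) :
    ∃ m ∈ shifts d, cutoffAt N (k + m) y = 1 := by
  set z : Fin d → ℝ := fun i => (y i - (N : ℝ) * (k i : ℝ)) / (N : ℝ)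
  have hz : ‖z‖ < 3 := by
    have h₁ := norm_lt_two_of_psiCut_ne_zero hx
    have h₂ := norm_sub_scaled N k x y
    have h₃ : ‖x - y‖ / N < 1 := (div_lt_one (by exact_mod_cast hN)).2 hxy
    have := norm_le_norm_add_norm_sub' z (fun i => (x i - (N : ℝ) * (k i : ℝ)) / (N : ℝ))
    rw [norm_sub_rev] at this
    linarith
  refine ⟨fun i => ⌊z i⌋, ?_, psiCut_eq_one ?_⟩
  · simp only [shifts, Fintype.mem_piFinset, Finset.mem_Icc]
    intro i
    have hzi := (abs_lt.1 ((norm_le_pi_norm z i).trans_lt hz))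
    refine ⟨Int.le_floor.2 (by push_cast; linarith), ?_⟩
    have : ⌊z i⌋ < 3 := Int.floor_lt.2 (by push_cast; linarith)
    omega
  · refine (pi_norm_le_iff_of_nonneg zero_le_one).2 fun i => ?_
    have hN' : (N : ℝ) ≠ 0 := by exact_mod_cast hN.ne'
    have : (y i - (N : ℝ) * ((k + fun i => ⌊z i⌋) i : ℝ)) / N = Int.fract (z i) := by
      have hzi : (N : ℝ) * z i = y i - N * k i := mul_div_cancel₀ _ hN'
      rw [Int.fract, Pi.add_apply, Int.cast_add, div_eq_iff hN']
      linear_combination -hzi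
    rw [this, Real.norm_eq_abs, abs_of_nonneg (Int.fract_nonneg _)]
    exact (Int.fract_lt_one _).le

end Cutoff

section Commutator

variable {d : ℕ} {Λ Λ' : Set (Fin d → ℝ)}

lemma enorm_truncMat_le (t : ℝ) (a : Λ → Λ' → ℂ) (l : Λ) (l' : Λ') :
    ‖truncMat t a l l'‖ₑ ≤ ‖a l l'‖ₑ := by
  unfold truncMat
  split <;> simp

lemma summable_truncMat_mul {q : ℝ≥0∞} (hq : q ≠ 0) (hΛ' : relSep Λ' < ∞) {a : Λ → Λ' → ℂ}
    (ha : sjNorm a < ∞) {c : Λ' → ℂ} (hc : seqNorm q c < ∞) (t : ℝ) (l : Λ) :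
    Summable fun l' => truncMat t a l l' * c l' := by
  have hbound : ∑' l', ‖truncMat t a l l' * c l'‖ₑ ≤ relSep Λ' * sjNorm a * seqNorm q c :=
    calc _ ≤ ∑' l', ‖a l l'‖ₑ * seqNorm q c := by
          gcongr with l'
          rw [enorm_mul]
          exact mul_le_mul' (enorm_truncMat_le t a l l') (le_seqNormE hq _ l')
      _ = (∑' l', ‖a l l'‖ₑ) * seqNorm q c := ENNReal.tsum_mul_right
      _ ≤ _ := by gcongr; exact tsum_enorm_row_le a l
  exact Summable.of_enorm (ne_top_of_le_ne_top
    (ENNReal.mul_ne_top (ENNReal.mul_lt_top hΛ' ha).ne hc.ne) hbound)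

/-- Entrywise majorant of the commutator of `A_N` with the cut-offs `Ψ_{Nk}^N`. -/
noncomputable def commutatorWeight (s : ℝ) (N : ℕ) (a : Λ → Λ' → ℂ) (l : Λ) (l' : Λ') : ℝ≥0∞ :=
  ‖a l l' - truncMat s a l l'‖ₑ + ENNReal.ofReal (s / N) * ‖a l l'‖ₑ

lemma tsum_commutatorWeight_row_le (s : ℝ) (N : ℕ) (a : Λ → Λ' → ℂ) (l : Λ) :
    ∑' l', commutatorWeight s N a l l' ≤ relSep Λ' *
      (sjNorm (fun l l' => a l l' - truncMat s a l l') + ENNReal.ofReal (s / N) * sjNorm a) := by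
  simp only [commutatorWeight, ENNReal.tsum_add, ENNReal.tsum_mul_left]
  calc _ ≤ relSep Λ' * sjNorm (fun l l' => a l l' - truncMat s a l l') +
        ENNReal.ofReal (s / N) * (relSep Λ' * sjNorm a) := by
        gcongr
        · exact tsum_enorm_row_le (fun l l' => a l l' - truncMat s a l l') l
        · exact tsum_enorm_row_le a l
    _ = _ := by ring

lemma tsum_commutatorWeight_col_le (s : ℝ) (N : ℕ) (a : Λ → Λ' → ℂ) (l' : Λ') :
    ∑' l, commutatorWeight s N a l l' ≤ 2 ^ d * relSep Λ *
      (sjNorm (fun l l' => a l l' - truncMat s a l l') + ENNReal.ofReal (s / N) * sjNorm a) := by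
  simp only [commutatorWeight, ENNReal.tsum_add, ENNReal.tsum_mul_left]
  calc _ ≤ 2 ^ d * relSep Λ * sjNorm (fun l l' => a l l' - truncMat s a l l') +
        ENNReal.ofReal (s / N) * (2 ^ d * relSep Λ * sjNorm a) := by
        gcongr
        · exact tsum_enorm_col_le (fun l l' => a l l' - truncMat s a l l') l'
        · exact tsum_enorm_col_le a l'
    _ = _ := by ring

/-- Near the diagonal the cut-off varies by at most `s/N`; away from it `a = a - a_s`. -/
lemma enorm_mul_cutoffAt_sub_le (s : ℝ) (N : ℕ) (a : Λ → Λ' → ℂ) (k : Fin d → ℤ) (l : Λ)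
    (l' : Λ') : ‖a l l'‖ₑ * ‖cutoffAt N k l' - cutoffAt N k l‖ₑ ≤ commutatorWeight s N a l l' := by
  rw [Real.enorm_eq_ofReal_abs]
  by_cases h : ‖(l : Fin d → ℝ) - l'‖ < s
  · calc _ ≤ ‖a l l'‖ₑ * ENNReal.ofReal (s / N) := by
          gcongr
          refine (abs_cutoffAt_sub_le N k _ _).trans ?_
          rw [norm_sub_rev]
          gcongr
      _ ≤ _ := by rw [mul_comm]; exact le_add_self
  · calc _ ≤ ‖a l l'‖ₑ * 1 := by
          gcongr
          exact ENNReal.ofReal_le_one.2 (abs_cutoffAt_sub_le_one N k _ _)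
      _ = ‖a l l' - truncMat s a l l'‖ₑ := by simp [truncMat, h]
      _ ≤ _ := le_self_add

lemma enorm_le_sum_shifts {N : ℕ} (hN : 0 < N) (c : Λ' → ℂ) {k : Fin d → ℤ} {x : Fin d → ℝ}
    {l' : Λ'} (hx : ‖x - l'‖ < N) (hne : cutoffAt N k l' ≠ cutoffAt N k x) :
    ‖c l'‖ₑ ≤ ∑ m ∈ shifts d, ‖psiOp N (k + m) c l'‖ₑ := by
  obtain ⟨m, hm, hm1⟩ : ∃ m ∈ shifts d, cutoffAt N (k + m) l' = 1 := by
    by_cases h : cutoffAt N k l' = 0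
    · exact exists_mem_shifts_cutoffAt_eq_one hN (fun hx' => hne (h.trans hx'.symm)) hx
    · exact exists_mem_shifts_cutoffAt_eq_one hN h (by simpa using hN)
  refine le_of_eq_of_le ?_ (Finset.single_le_sum (fun _ _ => zero_le) hm)
  rw [psiOp_apply, hm1, Complex.ofReal_one, one_mul]

lemma commutator_apply_eq_tsum (b : Λ → Λ' → ℂ) (N : ℕ) (k : Fin d → ℤ) (c : Λ' → ℂ) (l : Λ)
    (hb : Summable fun l' => b l l' * c l') :
    matApply b (psiOp N k c) l - psiOp N k (matApply b c) l =
      ∑' l', b l l' * ((cutoffAt N k l' - cutoffAt N k l : ℝ) * c l') := by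
  have hb' : Summable fun l' => b l l' * psiOp N k c l' := by
    refine hb.norm.of_norm_bounded fun l' => ?_
    rw [psiOp_apply, mul_left_comm, norm_mul _ (b l l' * c l')]
    refine mul_le_of_le_one_left (norm_nonneg _) ?_
    rw [Complex.norm_real, Real.norm_of_nonneg (cutoffAt_nonneg N k _)]
    exact psiCut_le_one _
  unfold matApply
  rw [psiOp_apply, ← tsum_mul_left, ← hb'.tsum_sub (hb.mul_left _)]
  refine tsum_congr fun l' => ?_
  rw [psiOp_apply]
  push_cast
  ring

lemma enorm_commutator_le {N : ℕ} (hN : 0 < N) (s : ℝ) (a : Λ → Λ' → ℂ) (c : Λ' → ℂ)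
    (k : Fin d → ℤ) (l : Λ) (hsum : Summable fun l' => truncMat N a l l' * c l') :
    ‖matApply (truncMat N a) (psiOp N k c) l - psiOp N k (matApply (truncMat N a) c) l‖ₑ ≤
      ∑ m ∈ shifts d, ∑' l', commutatorWeight s N a l l' * ‖psiOp N (k + m) c l'‖ₑ := by
  rw [commutator_apply_eq_tsum _ N k c l hsum]
  refine enorm_tsum_le_tsum_enorm.trans ?_
  rw [← Summable.tsum_finsetSum fun _ _ => ENNReal.summable]
  refine ENNReal.tsum_le_tsum fun l' => ?_
  rw [← Finset.mul_sum]
  by_cases hφ : cutoffAt N k l' = cutoffAt N k l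
  · simp [hφ]
  by_cases hl : ‖(l : Fin d → ℝ) - l'‖ < N
  · calc _ = ‖a l l'‖ₑ * ‖cutoffAt N k l' - cutoffAt N k l‖ₑ * ‖c l'‖ₑ := by
          rw [truncMat, if_pos hl, enorm_mul, enorm_mul, ← mul_assoc]
          congr 2
          exact congrArg ENNReal.ofNNReal (Complex.nnnorm_real _)
      _ ≤ _ := by
          gcongr
          · exact enorm_mul_cutoffAt_sub_le s N a k l l'
          · exact enorm_le_sum_shifts hN c hl hφ
  · simp [truncMat, hl]

end Commutator

section Estimate

variable {d : ℕ} {Λ Λ' : Set (Fin d → ℝ)} {p : ℝ≥0∞}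

lemma seqNorm_commutator_le (hp : 1 ≤ p) {N : ℕ} (hN : 0 < N) (s : ℝ) (a : Λ → Λ' → ℂ)
    (c : Λ' → ℂ) (hsum : ∀ l, Summable fun l' => truncMat N a l l' * c l') (k : Fin d → ℤ) :
    seqNorm p (fun l =>
        matApply (truncMat N a) (psiOp N k c) l - psiOp N k (matApply (truncMat N a) c) l) ≤
      2 ^ d * relSep Λ ^ (1 / p.toReal) * relSep Λ' ^ (1 - 1 / p.toReal) *
        (sjNorm (fun l l' => a l l' - truncMat s a l l') + ENNReal.ofReal (s / N) * sjNorm a) *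
        ∑ m ∈ shifts d, seqNorm p (psiOp N (k + m) c) := by
  set Θ := sjNorm (fun l l' => a l l' - truncMat s a l l') + ENNReal.ofReal (s / N) * sjNorm a
  set θ := 1 / p.toReal
  have hθ : θ ≤ 1 := by
    rcases eq_or_ne p ∞ with rfl | hp'
    · simp [θ]
    · exact div_le_one_of_le₀ (ENNReal.toReal_mono hp' hp) ENNReal.toReal_nonneg
  have hθ₀ : 0 ≤ θ := by positivity
  have hθ₁ : 0 ≤ 1 - θ := sub_nonneg.2 hθ
  have hconst : (2 ^ d * relSep Λ * Θ) ^ θ * (relSep Λ' * Θ) ^ (1 - θ) ≤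
      2 ^ d * relSep Λ ^ θ * relSep Λ' ^ (1 - θ) * Θ := by
    simp only [ENNReal.mul_rpow_of_nonneg _ _ hθ₀, ENNReal.mul_rpow_of_nonneg _ _ hθ₁]
    calc _ = (2 ^ d) ^ θ * relSep Λ ^ θ * relSep Λ' ^ (1 - θ) * (Θ ^ θ * Θ ^ (1 - θ)) := by ring
      _ ≤ (2 ^ d) ^ (1 : ℝ) * relSep Λ ^ θ * relSep Λ' ^ (1 - θ) * Θ ^ (θ + (1 - θ)) := by
        rw [ENNReal.rpow_add_of_nonneg _ _ hθ₀ hθ₁]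
        gcongr
        · exact one_le_pow₀ one_le_two
      _ = _ := by rw [ENNReal.rpow_one, add_sub_cancel, ENNReal.rpow_one]
  calc _ ≤ seqNormE p (fun l => ∑ m ∈ shifts d,
        ∑' l', commutatorWeight s N a l l' * ‖psiOp N (k + m) c l'‖ₑ) :=
        seqNormE_mono fun l => enorm_commutator_le hN s a c k l (hsum l)
    _ ≤ ∑ m ∈ shifts d, seqNormE p (fun l =>
        ∑' l', commutatorWeight s N a l l' * ‖psiOp N (k + m) c l'‖ₑ) :=
        seqNormE_finset_sum_le hp _ _
    _ ≤ ∑ m ∈ shifts d, 2 ^ d * relSep Λ ^ θ * relSep Λ' ^ (1 - θ) * Θ *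
        seqNorm p (psiOp N (k + m) c) := by
        gcongr with m
        refine (seqNormE_tsum_mul_le hp _ (tsum_commutatorWeight_row_le s N a)
          (tsum_commutatorWeight_col_le s N a) _).trans ?_
        exact mul_le_mul' hconst le_rfl
    _ = _ := by rw [Finset.mul_sum]

lemma seqNormE_commutator_le (hp : 1 ≤ p) {q : ℝ≥0∞} (hq : 1 ≤ q) {N : ℕ} (hN : 0 < N) (s : ℝ)
    (a : Λ → Λ' → ℂ) (c : Λ' → ℂ) (hsum : ∀ l, Summable fun l' => truncMat N a l l' * c l') :
    seqNormE q (fun k : Fin d → ℤ => seqNorm p (fun l =>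
        matApply (truncMat N a) (psiOp N k c) l - psiOp N k (matApply (truncMat N a) c) l)) ≤
      2 ^ d * 6 ^ d * relSep Λ ^ (1 / p.toReal) * relSep Λ' ^ (1 - 1 / p.toReal) *
        (sjNorm (fun l l' => a l l' - truncMat s a l l') + ENNReal.ofReal (s / N) * sjNorm a) *
        seqNormE q (fun k : Fin d → ℤ => seqNorm p (psiOp N k c)) := by
  set K := 2 ^ d * relSep Λ ^ (1 / p.toReal) * relSep Λ' ^ (1 - 1 / p.toReal) *
    (sjNorm (fun l l' => a l l' - truncMat s a l l') + ENNReal.ofReal (s / N) * sjNorm a)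
  calc _ ≤ seqNormE q (fun k => K * ∑ m ∈ shifts d, seqNorm p (psiOp N (k + m) c)) :=
        seqNormE_mono (seqNorm_commutator_le hp hN s a c hsum)
    _ ≤ K * ∑ m ∈ shifts d, seqNormE q (fun k => seqNorm p (psiOp N (k + m) c)) := by
        rw [seqNormE_const_mul (zero_lt_one.trans_le hq).ne']
        gcongr
        exact seqNormE_finset_sum_le hq _ _
    _ = K * (6 ^ d * seqNormE q (fun k => seqNorm p (psiOp N k c))) := by
        simp only [seqNormE_comp_add_right fun k => seqNorm p (psiOp N k c), Finset.sum_const,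
          card_shifts, nsmul_eq_mul, Nat.cast_pow, Nat.cast_ofNat]
    _ = _ := by ring

end Estimate

section Diagonal

variable {d : ℕ} {Λ Λ' : Set (Fin d → ℝ)}

lemma min_enorm_le_sjNorm_sub_truncMat_add (a : Λ → Λ' → ℂ) (N : ℕ) (l : Λ) (l' : Λ') (s : ℝ) :
    min ‖a l l'‖ₑ (ENNReal.ofReal (‖(l : Fin d → ℝ) - l'‖ / N) * ‖a l l'‖ₑ) ≤
      sjNorm (fun l l' => a l l' - truncMat s a l l') + ENNReal.ofReal (s / N) * sjNorm a := by
  by_cases h : ‖(l : Fin d → ℝ) - l'‖ < s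
  · refine (min_le_right _ _).trans (le_trans ?_ le_add_self)
    gcongr
    exact enorm_le_sjNorm a l l'
  · refine (min_le_left _ _).trans (le_trans ?_ le_self_add)
    simpa [truncMat, h] using enorm_le_sjNorm (fun l l' => a l l' - truncMat s a l l') l l'

lemma eq_zero_of_iInf_eq_zero {a : Λ → Λ' → ℂ} {N : ℕ} (hN : 0 < N) {S : Set ℝ}
    (h : ⨅ s ∈ S,
      (sjNorm (fun l l' => a l l' - truncMat s a l l') + ENNReal.ofReal (s / N) * sjNorm a) = 0)
    {l : Λ} {l' : Λ'} (hll' : (l : Fin d → ℝ) ≠ l') : a l l' = 0 := by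
  have hmin := (le_iInf₂ fun s (_ : s ∈ S) =>
    min_enorm_le_sjNorm_sub_truncMat_add a N l l' s).trans_eq h
  rw [min_le_iff, nonpos_iff_eq_zero, nonpos_iff_eq_zero, mul_eq_zero, ENNReal.ofReal_eq_zero,
    div_nonpos_iff] at hmin
  have hpos : 0 < ‖(l : Fin d → ℝ) - l'‖ := norm_pos_iff.2 (sub_ne_zero.2 hll')
  have hN' : (0 : ℝ) < N := Nat.cast_pos.2 hN
  rcases hmin with hmin | (hmin | hmin) | hmin
  · exact enorm_eq_zero.1 hmin
  · linarith [hmin.1, hmin.2]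
  · linarith [hmin.1, hmin.2]
  · exact enorm_eq_zero.1 hmin

lemma commutator_eq_zero_of_offDiag_eq_zero {a : Λ → Λ' → ℂ}
    (ha : ∀ (l : Λ) (l' : Λ'), (l : Fin d → ℝ) ≠ l' → a l l' = 0) (t : ℝ) (N : ℕ)
    (k : Fin d → ℤ) (c : Λ' → ℂ) (l : Λ) :
    matApply (truncMat t a) (psiOp N k c) l - psiOp N k (matApply (truncMat t a) c) l = 0 := by
  unfold matApply
  rw [psiOp_apply, ← tsum_mul_left, sub_eq_zero]
  refine tsum_congr fun l' => ?_
  rw [psiOp_apply]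
  by_cases h : (l : Fin d → ℝ) = l'
  · rw [h]; ring
  · simp [truncMat, ha l l' h]

end Diagonal

/-- **Commutator estimate (Lemma 2.6).** For `1 ≤ p, q ≤ ∞` there is a constant `C`
depending only on `d, p, q` such that for all relatively-separated `Λ, Λ' ⊆ ℝ^d`, every
`A ∈ C(Λ,Λ')`, every integer `N ≥ 1` and every `c ∈ ℓ^q(Λ')`,
`‖(‖(A_N Ψ_n^N - Ψ_n^N A_N) c‖_{ℓ^p(Λ)})_{n ∈ Nℤ^d}‖_{ℓ^q}` is bounded by
`C R(Λ)^{1/p} R(Λ')^{1-1/p} · min_{0 ≤ s ≤ N}(‖A - A_s‖_C + (s/N) ‖A‖_C) ·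
‖(‖Ψ_n^N c‖_{ℓ^p(Λ')})_{n ∈ Nℤ^d}‖_{ℓ^q}`. -/
theorem sjostrand_commutator_estimate (d : ℕ) (p q : ℝ≥0∞) (hp : 1 ≤ p) (hq : 1 ≤ q) :
    ∃ C : ℝ≥0∞, 0 < C ∧ C < ∞ ∧
      ∀ (Λ Λ' : Set (Fin d → ℝ)), relSep Λ < ∞ → relSep Λ' < ∞ →
        ∀ a : Λ → Λ' → ℂ, sjNorm a < ∞ →
          ∀ N : ℕ, 1 ≤ N →
            ∀ c : Λ' → ℂ, seqNorm q c < ∞ →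
              seqNormE q (fun k : Fin d → ℤ =>
                  seqNorm p (fun l : Λ =>
                    matApply (truncMat (N : ℝ) a) (psiOp N k c) l -
                      psiOp N k (matApply (truncMat (N : ℝ) a) c) l)) ≤
                C * relSep Λ ^ (1 / p.toReal) * relSep Λ' ^ (1 - 1 / p.toReal) *
                  (⨅ s ∈ Set.Icc (0 : ℝ) (N : ℝ),
                    (sjNorm (fun l l' => a l l' - truncMat s a l l') +
                      ENNReal.ofReal (s / N) * sjNorm a)) *
                  seqNormE q (fun k : Fin d → ℤ => seqNorm p (psiOp N k c)) := by
  refine ⟨2 ^ d * 6 ^ d, by positivity, by simp [ENNReal.mul_lt_top], ?_⟩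
  intro Λ Λ' _ hΛ' a ha N hN c hc
  have hsum := summable_truncMat_mul (zero_lt_one.trans_le hq).ne' hΛ' ha hc N
  refine ENNReal.le_mul_biInf_mul ⟨0, Set.left_mem_Icc.2 N.cast_nonneg⟩
    (fun s _ => seqNormE_commutator_le hp hq hN s a c hsum) fun h => ?_
  simp only [commutator_eq_zero_of_offDiag_eq_zero (fun l l' => eq_zero_of_iInf_eq_zero hN h)]
  simp [seqNorm, seqNormE_zero (zero_lt_one.trans_le hp).ne',
    seqNormE_zero (zero_lt_one.trans_le hq).ne']
end

section
/- Let 1 ≤ p ≤ ∞, Λ a relatively-separated subset of ℝ^d, and Φ = {φ_λ : λ ∈ Λ} a family of functions with ‖sup_{λ∈Λ} |φ_λ(·+λ)|‖_{W₁} < ∞. Then there exists a constant C depending only on d and p such that ‖S_Φ c‖_p ≤ C R(Λ)^{1−1/p} ‖sup_{λ∈Λ} |φ_λ(·+λ)|‖_{W₁} ‖c‖_{ℓ^p(Λ)} for all c ∈ ℓ^p(Λ). -/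
open scoped ENNReal NNReal

open MeasureTheory

/-- The Wiener amalgam space `W₁` norm of an `ℝ≥0∞`-valued function on `ℝ^d`:
`∑_{k ∈ ℤ^d} sup_{x ∈ k + [0,1)^d} g x`. -/
noncomputable def wienerNorm {d : ℕ} (g : (Fin d → ℝ) → ℝ≥0∞) : ℝ≥0∞ :=
  ∑' k : Fin d → ℤ, ⨆ x ∈ unitCube k, g x

/-- The modulus of continuity `ω_δ(f)(x) = sup_{‖y‖_∞ ≤ δ} |f(x+y) - f(x)|`
(valued in `ℝ≥0∞`; the norm on `Fin d → ℝ` is the sup-norm). -/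
noncomputable def modulus {d : ℕ} (δ : ℝ) (f : (Fin d → ℝ) → ℂ) (x : Fin d → ℝ) : ℝ≥0∞ :=
  ⨆ y ∈ Metric.closedBall (0 : Fin d → ℝ) δ, (‖f (x + y) - f x‖₊ : ℝ≥0∞)

/-- The synthesis operator `S_Φ c = ∑_{λ ∈ Λ} c(λ) φ_λ` has `ℓ^p`-stability: there is a
positive finite `C` with `C⁻¹ ‖c‖_{ℓ^p(Λ)} ≤ ‖S_Φ c‖_{L^p} ≤ C ‖c‖_{ℓ^p(Λ)}`
for all `c ∈ ℓ^p(Λ)`. -/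
def HasSynthesisStability {d : ℕ} {Λ : Set (Fin d → ℝ)} (p : ℝ≥0∞)
    (φ : Λ → (Fin d → ℝ) → ℂ) : Prop :=
  ∃ C : ℝ≥0∞, 0 < C ∧ C < ∞ ∧
    ∀ c : Λ → ℂ, seqNorm p c < ∞ →
      C⁻¹ * seqNorm p c ≤ eLpNorm (fun x => ∑' l : Λ, c l * φ l x) p volume ∧
      eLpNorm (fun x => ∑' l : Λ, c l * φ l x) p volume ≤ C * seqNorm p c

/-!
Write `g = sup_λ |φ_λ(· + λ)|` and let `G` be the step function equal, on each cube
`k + [0,1)^d`, to the supremum of `g` over that cube. Then `|φ_λ(x)| ≤ G(x - λ)`,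
`∫ G = ‖g‖_{W₁}`, and relative separation gives `∑_λ G(x - λ) ≤ R(Λ) ‖g‖_{W₁}`.
Schur's test with these row and column bounds yields the estimate with `C = 1`.
-/

namespace ENNReal

variable {ι : Type*}

theorem inner_le_weight_mul_Lp_tsum {p : ℝ} (hp : 1 ≤ p) (w f : ι → ℝ≥0∞) :
    ∑' i, w i * f i ≤ (∑' i, w i) ^ (1 - p⁻¹) * (∑' i, w i * f i ^ p) ^ p⁻¹ := by
  have hp' : 0 ≤ 1 - p⁻¹ := sub_nonneg.2 (inv_le_one_of_one_le₀ hp)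
  rw [ENNReal.tsum_eq_iSup_sum]
  refine iSup_le fun s => (inner_le_weight_mul_Lp_of_nonneg s hp w f).trans ?_
  gcongr
  · exact ENNReal.sum_le_tsum s
  · exact ENNReal.sum_le_tsum s

theorem rpow_inner_le_weight_mul_Lp_tsum {p : ℝ} (hp : 1 ≤ p) (w f : ι → ℝ≥0∞) :
    (∑' i, w i * f i) ^ p ≤ (∑' i, w i) ^ (p - 1) * ∑' i, w i * f i ^ p := by
  have hp₀ : 0 < p := zero_lt_one.trans_le hp
  calc (∑' i, w i * f i) ^ p
      ≤ ((∑' i, w i) ^ (1 - p⁻¹) * (∑' i, w i * f i ^ p) ^ p⁻¹) ^ p := by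
        gcongr; exact inner_le_weight_mul_Lp_tsum hp w f
    _ = (∑' i, w i) ^ (p - 1) * ∑' i, w i * f i ^ p := by
        rw [mul_rpow_of_nonneg _ _ hp₀.le, ← rpow_mul, ← rpow_mul, inv_mul_cancel₀ hp₀.ne',
          rpow_one, sub_mul, one_mul, inv_mul_cancel₀ hp₀.ne']

theorem one_div_toReal_le_one {p : ℝ≥0∞} (hp : 1 ≤ p) : 1 / p.toReal ≤ 1 := by
  rcases eq_or_ne p ∞ with rfl | hp_top
  · simp
  have hr : 1 ≤ p.toReal := by simpa using ENNReal.toReal_mono hp_top hp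
  exact div_le_one_of_le₀ hr (zero_le_one.trans hr)

end ENNReal

section SchurTest

variable {α ι ε : Type*} [MeasurableSpace α] {μ : Measure α} [ENorm ε]
  {F : α → ε} {K : ι → α → ℝ≥0∞} {a : ι → ℝ≥0∞} {M W : ℝ≥0∞}

theorem eLpNorm_top_le_of_enorm_le_tsum_mul (hF : ∀ x, ‖F x‖ₑ ≤ ∑' i, K i x * a i)
    (hM : ∀ x, ∑' i, K i x ≤ M) :
    eLpNorm F ∞ μ ≤ M * ⨆ i, a i := by
  rw [eLpNorm_exponent_top]
  refine eLpNormEssSup_le_of_ae_enorm_bound (Filter.Eventually.of_forall fun x => ?_)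
  calc ‖F x‖ₑ ≤ ∑' i, K i x * a i := hF x
    _ ≤ ∑' i, K i x * ⨆ j, a j := by gcongr with i; exact le_iSup a i
    _ = (∑' i, K i x) * ⨆ j, a j := ENNReal.tsum_mul_right
    _ ≤ M * ⨆ i, a i := by gcongr; exact hM x

theorem lintegral_enorm_rpow_le_of_enorm_le_tsum_mul [Countable ι] {r : ℝ} (hr : 1 ≤ r)
    (hK : ∀ i, Measurable (K i)) (hF : ∀ x, ‖F x‖ₑ ≤ ∑' i, K i x * a i)
    (hM : ∀ x, ∑' i, K i x ≤ M) (hW : ∀ i, ∫⁻ x, K i x ∂μ ≤ W) :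
    ∫⁻ x, ‖F x‖ₑ ^ r ∂μ ≤ M ^ (r - 1) * (W * ∑' i, a i ^ r) := by
  calc ∫⁻ x, ‖F x‖ₑ ^ r ∂μ
      ≤ ∫⁻ x, M ^ (r - 1) * ∑' i, K i x * a i ^ r ∂μ := by
        refine lintegral_mono fun x => ?_
        calc ‖F x‖ₑ ^ r ≤ (∑' i, K i x * a i) ^ r := by gcongr; exact hF x
          _ ≤ (∑' i, K i x) ^ (r - 1) * ∑' i, K i x * a i ^ r :=
            ENNReal.rpow_inner_le_weight_mul_Lp_tsum hr _ _
          _ ≤ M ^ (r - 1) * ∑' i, K i x * a i ^ r := by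
            gcongr
            exact hM x
    _ = M ^ (r - 1) * ∑' i, (∫⁻ x, K i x ∂μ) * a i ^ r := by
        rw [lintegral_const_mul _ (Measurable.tsum fun i => (hK i).mul_const _),
          lintegral_tsum fun i => ((hK i).mul_const _).aemeasurable]
        simp only [lintegral_mul_const _ (hK _)]
    _ ≤ M ^ (r - 1) * (W * ∑' i, a i ^ r) := by
        gcongr M ^ (r - 1) * ?_
        rw [← ENNReal.tsum_mul_left]
        exact ENNReal.tsum_le_tsum fun i => mul_le_mul_left (hW i) _

/-- Schur's test for the kernel `K`, as an operator from `ℓ^p(ι)` to `L^p(μ)`. -/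
theorem eLpNorm_le_of_enorm_le_tsum_mul [Countable ι] {p : ℝ≥0∞} (hp : 1 ≤ p)
    (hK : ∀ i, Measurable (K i)) (hF : ∀ x, ‖F x‖ₑ ≤ ∑' i, K i x * a i)
    (hM : ∀ x, ∑' i, K i x ≤ M) (hW : ∀ i, ∫⁻ x, K i x ∂μ ≤ W) :
    eLpNorm F p μ ≤ M ^ (1 - 1 / p.toReal) * W ^ (1 / p.toReal) * seqNormE p a := by
  by_cases hp_top : p = ∞
  · subst hp_top
    simpa [seqNormE] using eLpNorm_top_le_of_enorm_le_tsum_mul (μ := μ) hF hM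
  set r := p.toReal
  have hr : 1 ≤ r := by simpa using ENNReal.toReal_mono hp_top hp
  rw [eLpNorm_eq_lintegral_rpow_enorm_toReal (zero_lt_one.trans_le hp).ne' hp_top,
    seqNormE, if_neg hp_top]
  calc (∫⁻ x, ‖F x‖ₑ ^ r ∂μ) ^ (1 / r)
      ≤ (M ^ (r - 1) * (W * ∑' i, a i ^ r)) ^ (1 / r) := by
        gcongr; exact lintegral_enorm_rpow_le_of_enorm_le_tsum_mul hr hK hF hM hW
    _ = M ^ (1 - 1 / r) * W ^ (1 / r) * (∑' i, a i ^ r) ^ (1 / r) := by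
        have h1r : (0 : ℝ) ≤ 1 / r := by positivity
        rw [ENNReal.mul_rpow_of_nonneg _ _ h1r, ENNReal.mul_rpow_of_nonneg _ _ h1r,
          ← ENNReal.rpow_mul, mul_assoc]
        congr 3
        field_simp

end SchurTest

section UnitCubes

variable {d : ℕ}

noncomputable def cubeIndex (x : Fin d → ℝ) : Fin d → ℤ := fun i => ⌊x i⌋

noncomputable def cubeSup (g : (Fin d → ℝ) → ℝ≥0∞) (k : Fin d → ℤ) : ℝ≥0∞ :=
  ⨆ x ∈ unitCube k, g x

theorem mem_unitCube_iff_cubeIndex_eq {x : Fin d → ℝ} {k : Fin d → ℤ} :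
    x ∈ unitCube k ↔ cubeIndex x = k := by
  simp only [unitCube, Set.mem_ofPred_eq, funext_iff, cubeIndex, Int.floor_eq_iff]

theorem sub_intCast_mem_unitCube_zero_iff {x : Fin d → ℝ} {k : Fin d → ℤ} :
    x - (fun i => (k i : ℝ)) ∈ unitCube 0 ↔ cubeIndex x = k := by
  simp only [mem_unitCube_iff_cubeIndex_eq, funext_iff, cubeIndex, Pi.sub_apply,
    Int.floor_sub_intCast, Pi.zero_apply, sub_eq_zero]

theorem measurable_cubeIndex : Measurable (cubeIndex (d := d)) :=
  measurable_pi_lambda _ fun i => (measurable_pi_apply i).floor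

theorem volume_unitCube (k : Fin d → ℤ) : volume (unitCube k) = 1 := by
  have : unitCube k = Set.univ.pi fun i => Set.Ico (k i : ℝ) (k i + 1) := by
    ext x; simp [unitCube, Set.mem_pi]
  simp [this, volume_pi_pi, Real.volume_Ico]

theorem lintegral_comp_cubeIndex (h : (Fin d → ℤ) → ℝ≥0∞) :
    ∫⁻ x, h (cubeIndex x) = ∑' k, h k := by
  rw [← lintegral_map (measurable_of_countable h) measurable_cubeIndex, lintegral_countable']
  refine tsum_congr fun k => ?_
  rw [Measure.map_apply measurable_cubeIndex (measurableSet_singleton k)]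
  have : cubeIndex ⁻¹' {k} = unitCube k := by
    ext x; exact mem_unitCube_iff_cubeIndex_eq.symm
  rw [this, volume_unitCube, mul_one]

theorem le_cubeSup_cubeIndex (g : (Fin d → ℝ) → ℝ≥0∞) (x : Fin d → ℝ) :
    g x ≤ cubeSup g (cubeIndex x) :=
  le_biSup g (mem_unitCube_iff_cubeIndex_eq.2 rfl)

theorem measurable_cubeSup_cubeIndex_sub (g : (Fin d → ℝ) → ℝ≥0∞) (t : Fin d → ℝ) :
    Measurable fun x => cubeSup g (cubeIndex (x - t)) :=
  (measurable_of_countable (cubeSup g)).comp (measurable_cubeIndex.comp (measurable_sub_const t))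

theorem lintegral_cubeSup_cubeIndex_sub (g : (Fin d → ℝ) → ℝ≥0∞) (t : Fin d → ℝ) :
    ∫⁻ x, cubeSup g (cubeIndex (x - t)) = wienerNorm g :=
  (lintegral_sub_right_eq_self (fun y => cubeSup g (cubeIndex y)) t).trans
    (lintegral_comp_cubeIndex (cubeSup g))

end UnitCubes

section RelativelySeparated

variable {d : ℕ} (Λ : Set (Fin d → ℝ))

theorem tsum_indicator_unitCube_le_relSep (x : Fin d → ℝ) :
    ∑' l : Λ, (unitCube 0).indicator (fun _ => (1 : ℝ≥0∞)) (x - (l : Fin d → ℝ)) ≤ relSep Λ :=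
  le_iSup (fun x : Fin d → ℝ => ∑' l : Λ,
    (unitCube 0).indicator (fun _ => (1 : ℝ≥0∞)) (x - (l : Fin d → ℝ))) x

variable {Λ} in
theorem countable_of_relSep_lt_top (hΛ : relSep Λ < ∞) : Λ.Countable := by
  have hfin (x : Fin d → ℝ) : {l : Λ | x - (l : Fin d → ℝ) ∈ unitCube 0}.Finite := by
    refine (ENNReal.finite_const_le_of_tsum_ne_top
      ((tsum_indicator_unitCube_le_relSep Λ x).trans_lt hΛ).ne one_ne_zero).subset fun l hl => ?_
    exact (Set.indicator_of_mem hl fun _ => (1 : ℝ≥0∞)).ge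
  have hcover : (Set.univ : Set Λ) ⊆
      ⋃ k : Fin d → ℤ, {l : Λ | (fun i => (k i : ℝ)) - (l : Fin d → ℝ) ∈ unitCube 0} := by
    intro l _
    refine Set.mem_iUnion.2 ⟨fun i => ⌈(l : Fin d → ℝ) i⌉, ?_⟩
    simp only [Set.mem_ofPred_eq, mem_unitCube_iff_cubeIndex_eq, cubeIndex, funext_iff,
      Pi.sub_apply, Pi.zero_apply, Int.floor_eq_zero_iff, Set.mem_Ico, sub_nonneg]
    exact fun i => ⟨Int.le_ceil _, by linarith [Int.ceil_lt_add_one ((l : Fin d → ℝ) i)]⟩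
  rw [← Set.countable_coe_iff, ← Set.countable_univ_iff]
  exact (Set.countable_iUnion fun k => (hfin _).countable).mono hcover

theorem tsum_comp_cubeIndex_sub_le (h : (Fin d → ℤ) → ℝ≥0∞) (x : Fin d → ℝ) :
    ∑' l : Λ, h (cubeIndex (x - (l : Fin d → ℝ))) ≤ (∑' k, h k) * relSep Λ := by
  have hexpand (y : Fin d → ℝ) : h (cubeIndex y) =
      ∑' k, h k * (unitCube 0).indicator (fun _ => (1 : ℝ≥0∞)) (y - fun i => (k i : ℝ)) := by
    classical
    simp_rw [Set.indicator_apply, sub_intCast_mem_unitCube_zero_iff, mul_ite, mul_one, mul_zero,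
      eq_comm (a := cubeIndex y)]
    rw [tsum_ite_eq]
  calc ∑' l : Λ, h (cubeIndex (x - (l : Fin d → ℝ)))
      = ∑' k, h k * ∑' l : Λ, (unitCube 0).indicator (fun _ => (1 : ℝ≥0∞))
          ((x - fun i => (k i : ℝ)) - (l : Fin d → ℝ)) := by
        simp_rw [hexpand, ← ENNReal.tsum_mul_left]
        rw [ENNReal.tsum_comm]
        refine tsum_congr fun k => tsum_congr fun l => ?_
        rw [sub_right_comm]
    _ ≤ ∑' k, h k * relSep Λ := by
        gcongr with k
        exact tsum_indicator_unitCube_le_relSep Λ _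
    _ = (∑' k, h k) * relSep Λ := ENNReal.tsum_mul_right

theorem le_cubeSup_iSup_translate (f : Λ → (Fin d → ℝ) → ℝ≥0∞) (l : Λ) (x : Fin d → ℝ) :
    f l x ≤ cubeSup (fun y => ⨆ l' : Λ, f l' (y + (l' : Fin d → ℝ)))
      (cubeIndex (x - (l : Fin d → ℝ))) :=
  calc f l x = f l (x - l + l) := by rw [sub_add_cancel]
    _ ≤ ⨆ l' : Λ, f l' (x - l + l') := le_iSup (fun l' : Λ => f l' (x - l + l')) l
    _ ≤ _ := le_cubeSup_cubeIndex _ _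

variable {Λ} in
theorem eLpNorm_le_relSep_rpow_mul_wienerNorm_mul {ε : Type*} [ENorm ε] {p : ℝ≥0∞} (hp : 1 ≤ p)
    (hΛ : relSep Λ < ∞) (g : (Fin d → ℝ) → ℝ≥0∞) {F : (Fin d → ℝ) → ε} {a : Λ → ℝ≥0∞}
    (hF : ∀ x, ‖F x‖ₑ ≤ ∑' l : Λ, cubeSup g (cubeIndex (x - l)) * a l) :
    eLpNorm F p volume ≤ relSep Λ ^ (1 - 1 / p.toReal) * wienerNorm g * seqNormE p a := by
  have : Countable Λ := (countable_of_relSep_lt_top hΛ).to_subtype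
  have hs : 0 ≤ 1 - 1 / p.toReal := sub_nonneg.2 (ENNReal.one_div_toReal_le_one hp)
  have hg : wienerNorm g ^ (1 - 1 / p.toReal) * wienerNorm g ^ (1 / p.toReal) = wienerNorm g := by
    rw [← ENNReal.rpow_add_of_nonneg _ _ hs (by positivity), sub_add_cancel, ENNReal.rpow_one]
  calc eLpNorm F p volume
      ≤ (wienerNorm g * relSep Λ) ^ (1 - 1 / p.toReal) * wienerNorm g ^ (1 / p.toReal) *
          seqNormE p a :=
        eLpNorm_le_of_enorm_le_tsum_mul hp (fun l => measurable_cubeSup_cubeIndex_sub g l) hF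
          (tsum_comp_cubeIndex_sub_le Λ _) fun l => (lintegral_cubeSup_cubeIndex_sub g l).le
    _ = relSep Λ ^ (1 - 1 / p.toReal) * wienerNorm g * seqNormE p a := by
        rw [ENNReal.mul_rpow_of_nonneg _ _ hs]
        conv_rhs => rw [← hg]
        ring

end RelativelySeparated

/-- **Boundedness of the synthesis operator (Lemma 3.5).** For `1 ≤ p ≤ ∞` there is a
constant `C` depending only on `d` and `p` such that for every relatively-separated
`Λ ⊆ ℝ^d` and every family `Φ = (φ_λ)` with `‖sup_λ |φ_λ(·+λ)|‖_{W₁} < ∞`,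
`‖S_Φ c‖_p ≤ C R(Λ)^{1-1/p} ‖sup_λ |φ_λ(·+λ)|‖_{W₁} ‖c‖_{ℓ^p(Λ)}` for all `c ∈ ℓ^p(Λ)`. -/
theorem synthesis_operator_bounded (d : ℕ) (p : ℝ≥0∞) (hp : 1 ≤ p) :
    ∃ C : ℝ≥0∞, 0 < C ∧ C < ∞ ∧
      ∀ (Λ : Set (Fin d → ℝ)), relSep Λ < ∞ →
        ∀ φ : Λ → (Fin d → ℝ) → ℂ,
          wienerNorm (fun x => ⨆ l : Λ, (‖φ l (x + (l : Fin d → ℝ))‖₊ : ℝ≥0∞)) < ∞ →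
            ∀ c : Λ → ℂ, seqNorm p c < ∞ →
              eLpNorm (fun x => ∑' l : Λ, c l * φ l x) p volume ≤
                C * relSep Λ ^ (1 - 1 / p.toReal) *
                  wienerNorm (fun x => ⨆ l : Λ, (‖φ l (x + (l : Fin d → ℝ))‖₊ : ℝ≥0∞)) *
                  seqNorm p c := by
  refine ⟨1, one_pos, ENNReal.one_lt_top, fun Λ hΛ φ _ c _ => ?_⟩
  rw [one_mul]
  refine eLpNorm_le_relSep_rpow_mul_wienerNorm_mul hp hΛ _ fun x => ?_
  calc ‖∑' l : Λ, c l * φ l x‖ₑ ≤ ∑' l : Λ, ‖c l‖ₑ * ‖φ l x‖ₑ := by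
        simpa only [enorm_mul] using enorm_tsum_le_tsum_enorm (f := fun l : Λ => c l * φ l x)
    _ ≤ _ := ENNReal.tsum_le_tsum fun l => by
        rw [mul_comm]
        exact mul_le_mul_left
          (le_cubeSup_iSup_translate Λ (fun l x => ‖φ l x‖ₑ) l x) _
end
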